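/- arXiv:1201.1146 — 3 statements merged into one kernel-verified Lean document; each statement's English description precedes it below -/
import Mathlib

section
/- Vanishing at infinity: Suppose there exist constants M, s₀ > 0 such that |μ(uᵀ𝒳v)| ≤ M and σ(uᵀ𝒳v) ≤ s₀ for all unit vectors u, v, and σ > 0. Then O(X, 𝒳) ≥ (‖X‖₂ − M)/s₀ where ‖X‖₂ is the spectral norm, hence TPD(X, 𝒳) = 1/(1+O(X,𝒳)) → 0 as the Frobenius norm ‖X‖ → ∞. -/
/-!
Every term `|uᵀXv - μ(u,v)| / σ(u,v)` is at most `O(X)`, and `|μ| ≤ M`, `σ ≤ s₀`, so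
`|uᵀXv| ≤ M + s₀·O(X)` for all unit `u, v`; the supremum over `u, v` gives the spectral bound.
Taking `u, v` among the standard basis vectors bounds every entry of `X` by the same quantity,
so `‖X‖_F ≤ √(n₁n₂)·(M + s₀·O(X))`: hence `O(X) → ∞`, and `1/(1 + O(X)) → 0`, as `‖X‖_F → ∞`.
-/

open Matrix Filter

/-- The spectral norm of a matrix, as `sup_{‖u‖=‖v‖=1} uᵀXv`. -/
noncomputable def specNorm {n₁ n₂ : ℕ} (X : Matrix (Fin n₁) (Fin n₂) ℝ) : ℝ :=
  sSup {r | ∃ (u : Fin n₁ → ℝ) (v : Fin n₂ → ℝ),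
    u ⬝ᵥ u = 1 ∧ v ⬝ᵥ v = 1 ∧ r = u ⬝ᵥ (X *ᵥ v)}

/-- The Frobenius norm of a matrix. -/
noncomputable def frobNorm {n₁ n₂ : ℕ} (X : Matrix (Fin n₁) (Fin n₂) ℝ) : ℝ :=
  Real.sqrt (∑ i, ∑ j, (X i j) ^ 2)

lemma abs_le_add_mul_of_abs_sub_div_le {x m s M s₀ o : ℝ} (hm : |m| ≤ M) (hs : 0 < s)
    (hs₀ : s ≤ s₀) (ho : |x - m| / s ≤ o) : |x| ≤ M + s₀ * o := by
  have ho_nonneg : 0 ≤ o := (div_nonneg (abs_nonneg _) hs.le).trans ho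
  have hdev : |x - m| ≤ s₀ * o :=
    calc |x - m| ≤ o * s := (div_le_iff₀ hs).1 ho
      _ ≤ o * s₀ := mul_le_mul_of_nonneg_left hs₀ ho_nonneg
      _ = s₀ * o := mul_comm _ _
  linarith [abs_sub_abs_le_abs_sub x m]

lemma Matrix.single_one_dotProduct_mulVec_single_one {ι κ R : Type*} [Fintype ι] [Fintype κ]
    [DecidableEq ι] [DecidableEq κ] [NonAssocSemiring R] (X : Matrix ι κ R) (i : ι) (j : κ) :
    Pi.single i 1 ⬝ᵥ (X *ᵥ Pi.single j 1) = X i j := by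
  rw [mulVec_single_one, single_one_dotProduct]
  rfl

lemma Matrix.single_one_dotProduct_single_one {ι R : Type*} [Fintype ι] [DecidableEq ι]
    [NonAssocSemiring R] (i : ι) : (Pi.single i 1 : ι → R) ⬝ᵥ Pi.single i 1 = 1 := by
  rw [single_one_dotProduct, Pi.single_eq_same]

lemma specNorm_le {n₁ n₂ : ℕ} {X : Matrix (Fin n₁) (Fin n₂) ℝ} {K : ℝ} (hK : 0 ≤ K)
    (h : ∀ u v, u ⬝ᵥ u = 1 → v ⬝ᵥ v = 1 → u ⬝ᵥ (X *ᵥ v) ≤ K) : specNorm X ≤ K :=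
  Real.sSup_le (by rintro r ⟨u, v, hu, hv, rfl⟩; exact h u v hu hv) hK

lemma frobNorm_le_of_forall_abs_le {n₁ n₂ : ℕ} {X : Matrix (Fin n₁) (Fin n₂) ℝ} {K : ℝ}
    (hK : 0 ≤ K) (h : ∀ i j, |X i j| ≤ K) : frobNorm X ≤ √(n₁ * n₂) * K := by
  have hsum : ∑ i, ∑ j, X i j ^ 2 ≤ n₁ * n₂ * K ^ 2 :=
    calc ∑ i, ∑ j, X i j ^ 2 ≤ ∑ _i : Fin n₁, ∑ _j : Fin n₂, K ^ 2 :=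
          Finset.sum_le_sum fun i _ => Finset.sum_le_sum fun j _ =>
            sq_le_sq' (abs_le.1 (h i j)).1 (abs_le.1 (h i j)).2
      _ = n₁ * n₂ * K ^ 2 := by simp only [Finset.sum_const, Finset.card_univ,
          Fintype.card_fin, nsmul_eq_mul]; ring
  calc frobNorm X ≤ √(n₁ * n₂ * K ^ 2) := Real.sqrt_le_sqrt hsum
    _ = √(n₁ * n₂) * K := by rw [Real.sqrt_mul (by positivity), Real.sqrt_sq hK]

lemma Filter.tendsto_atTop_of_le_add_mul {α : Type*} {l : Filter α} {f g : α → ℝ} {a b : ℝ}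
    (hb : 0 ≤ b) (hf : Tendsto f l atTop) (hfg : ∀ x, f x ≤ a + b * g x) :
    Tendsto g l atTop := by
  rw [tendsto_atTop]
  intro B
  filter_upwards [hf.eventually_gt_atTop (a + b * B)] with x hx
  exact (lt_of_mul_lt_mul_left (by linarith [hfg x]) hb).le

/-- vanishing at infinity.  If `|μ(uᵀ𝒳v)| ≤ M` and `0 < σ(uᵀ𝒳v) ≤ s₀`
uniformly over unit `u, v`, then `O(X) ≥ (‖X‖₂ − M)/s₀` (spectral norm), and hence
`TPD(X) = 1/(1+O(X)) → 0` as the Frobenius norm `‖X‖ → ∞`. -/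
theorem tpd_vanishing_at_infinity {n₁ n₂ : ℕ}
    (m s : (Fin n₁ → ℝ) → (Fin n₂ → ℝ) → ℝ) (M s₀ : ℝ) (hM : 0 < M) (hs₀ : 0 < s₀)
    (hm : ∀ u v, u ⬝ᵥ u = 1 → v ⬝ᵥ v = 1 → |m u v| ≤ M)
    (hs : ∀ u v, u ⬝ᵥ u = 1 → v ⬝ᵥ v = 1 → 0 < s u v ∧ s u v ≤ s₀)
    (O : Matrix (Fin n₁) (Fin n₂) ℝ → ℝ)
    (hO : ∀ X, O X = sSup {r | ∃ (u : Fin n₁ → ℝ) (v : Fin n₂ → ℝ),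
      u ⬝ᵥ u = 1 ∧ v ⬝ᵥ v = 1 ∧ r = |u ⬝ᵥ (X *ᵥ v) - m u v| / s u v})
    (hbdd : ∀ X, BddAbove {r | ∃ (u : Fin n₁ → ℝ) (v : Fin n₂ → ℝ),
      u ⬝ᵥ u = 1 ∧ v ⬝ᵥ v = 1 ∧ r = |u ⬝ᵥ (X *ᵥ v) - m u v| / s u v}) :
    (∀ X, (specNorm X - M) / s₀ ≤ O X) ∧
    Tendsto (fun X : Matrix (Fin n₁) (Fin n₂) ℝ => 1 / (1 + O X))
      (comap frobNorm atTop) (nhds 0) := by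
  have hO_nonneg : ∀ X, 0 ≤ O X := fun X => by
    rw [hO X]
    exact Real.sSup_nonneg (by
      rintro r ⟨u, v, hu, hv, rfl⟩
      exact div_nonneg (abs_nonneg _) (hs u v hu hv).1.le)
  have hK : ∀ X, 0 ≤ M + s₀ * O X := fun X => by have hOX := hO_nonneg X; positivity
  have hbilin : ∀ X u v, u ⬝ᵥ u = 1 → v ⬝ᵥ v = 1 → |u ⬝ᵥ (X *ᵥ v)| ≤ M + s₀ * O X := by
    intro X u v hu hv
    refine abs_le_add_mul_of_abs_sub_div_le (hm u v hu hv) (hs u v hu hv).1 (hs u v hu hv).2 ?_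
    rw [hO X]
    exact le_csSup (hbdd X) ⟨u, v, hu, hv, rfl⟩
  refine ⟨fun X => ?_, ?_⟩
  · have hspec := specNorm_le (hK X) fun u v hu hv => (le_abs_self _).trans (hbilin X u v hu hv)
    rw [div_le_iff₀ hs₀]
    linarith
  have hfrob : ∀ X, frobNorm X ≤ √(n₁ * n₂) * M + √(n₁ * n₂) * s₀ * O X := fun X => by
    rw [mul_assoc, ← mul_add]
    refine frobNorm_le_of_forall_abs_le (hK X) fun i j => ?_
    simpa only [single_one_dotProduct_mulVec_single_one] using
      hbilin X _ _ (single_one_dotProduct_single_one i) (single_one_dotProduct_single_one j)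
  have hO_atTop : Tendsto O (comap frobNorm atTop) atTop :=
    tendsto_atTop_of_le_add_mul (by positivity) tendsto_comap hfrob
  simpa only [one_div, Function.comp_def] using
    tendsto_inv_atTop_zero.comp (tendsto_atTop_add_const_left _ 1 hO_atTop)
end

section
/- Affine invariance: Let A be an invertible n₁ × n₁ matrix and B an invertible n₂ × n₂ matrix. Assume μ is translation and scale equivariant and σ is scale equivariant and translation invariant (μ(sY+c) = sμ(Y)+c, σ(sY+c) = |s|σ(Y)). Then the tensor outlyingness satisfies O(AXB, A𝒳B) = O(X, 𝒳) for every matrix X, and hence TPD(AXB, A𝒳B) = TPD(X, 𝒳). -/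
/-!
Write `f(u, v)` for the standardized deviation of `uᵀXv` from the projected sample `uᵀ𝒳v`.
Since `μ` and `σ` are scale equivariant, `f(tu, sv) = f(u, v)` for `t, s ≠ 0`, so the supremum
over unit vectors is a supremum over all nonzero vectors. Now `uᵀ(AXB)v = (Aᵀu)ᵀX(Bv)`, and
`u ↦ Aᵀu`, `v ↦ Bv` are bijections of the nonzero vectors, so both suprema run over the same set.
-/

open Matrix

section Normalization

variable {m n : Type*} [Fintype m] [Fintype n]

theorem exists_ne_zero_smul_dotProduct_self_eq_one {w : m → ℝ} (hw : w ≠ 0) :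
    ∃ t : ℝ, t ≠ 0 ∧ (t • w) ⬝ᵥ (t • w) = 1 := by
  have hpos : 0 < w ⬝ᵥ w :=
    lt_of_le_of_ne (Finset.sum_nonneg fun i _ => mul_self_nonneg (w i))
      (Ne.symm (dotProduct_self_eq_zero.not.mpr hw))
  refine ⟨(√(w ⬝ᵥ w))⁻¹, inv_ne_zero (Real.sqrt_pos.mpr hpos).ne', ?_⟩
  rw [smul_dotProduct, dotProduct_smul, smul_eq_mul, smul_eq_mul, ← mul_assoc, ← mul_inv,
    Real.mul_self_sqrt hpos.le, inv_mul_cancel₀ hpos.ne']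

theorem setOf_unit_eq_setOf_ne_zero {α : Type*} {f : (m → ℝ) → (n → ℝ) → α}
    (hf : ∀ {t s : ℝ}, t ≠ 0 → s ≠ 0 → ∀ u v, f (t • u) (s • v) = f u v) :
    {r | ∃ u v, u ⬝ᵥ u = 1 ∧ v ⬝ᵥ v = 1 ∧ r = f u v} =
      {r | ∃ u v, u ≠ 0 ∧ v ≠ 0 ∧ r = f u v} := by
  ext r
  constructor
  · rintro ⟨u, v, hu, hv, rfl⟩
    refine ⟨u, v, ?_, ?_, rfl⟩ <;> rintro rfl <;> simp at hu hv
  · rintro ⟨u, v, hu, hv, rfl⟩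
    obtain ⟨t, ht, htu⟩ := exists_ne_zero_smul_dotProduct_self_eq_one hu
    obtain ⟨s, hs, hsv⟩ := exists_ne_zero_smul_dotProduct_self_eq_one hv
    exact ⟨t • u, s • v, htu, hsv, (hf ht hs u v).symm⟩

end Normalization

theorem setOf_ne_zero_vecMul_mulVec {m n K α : Type*} [Fintype m] [DecidableEq m] [Fintype n]
    [DecidableEq n] [Field K] {f : (m → K) → (n → K) → α} {A : Matrix m m K}
    {B : Matrix n n K} (hA : IsUnit A) (hB : IsUnit B) :
    {r | ∃ u v, u ≠ 0 ∧ v ≠ 0 ∧ r = f (u ᵥ* A) (B *ᵥ v)} =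
      {r | ∃ u v, u ≠ 0 ∧ v ≠ 0 ∧ r = f u v} := by
  have hAinj := vecMul_injective_iff_isUnit.mpr hA
  have hBinj := mulVec_injective_iff_isUnit.mpr hB
  ext r
  constructor
  · rintro ⟨u, v, hu, hv, rfl⟩
    exact ⟨u ᵥ* A, B *ᵥ v, (hAinj.ne_iff' (zero_vecMul A)).mpr hu,
      (hBinj.ne_iff' (mulVec_zero B)).mpr hv, rfl⟩
  · rintro ⟨u, v, hu, hv, rfl⟩
    obtain ⟨u', rfl⟩ := vecMul_surjective_iff_isUnit.mpr hA u
    obtain ⟨v', rfl⟩ := mulVec_surjective_iff_isUnit.mpr hB v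
    exact ⟨u', v', fun h => hu (by simp [h]), fun h => hv (by simp [h]), rfl⟩

section Outlyingness

variable {Ω : Type*} {m n : Type*} [Fintype m] [Fintype n]

noncomputable def standardizedDev (μ σ : (Ω → ℝ) → ℝ) (x : ℝ) (Y : Ω → ℝ) : ℝ :=
  |x - μ Y| / σ Y

theorem standardizedDev_mul {μ σ : (Ω → ℝ) → ℝ}
    (hμ : ∀ (t : ℝ) (Y : Ω → ℝ), μ (fun ω => t * Y ω) = t * μ Y)
    (hσ : ∀ (t : ℝ) (Y : Ω → ℝ), σ (fun ω => t * Y ω) = |t| * σ Y)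
    {t : ℝ} (ht : t ≠ 0) (x : ℝ) (Y : Ω → ℝ) :
    standardizedDev μ σ (t * x) (fun ω => t * Y ω) = standardizedDev μ σ x Y := by
  rw [standardizedDev, standardizedDev, hμ, hσ, ← mul_sub, abs_mul,
    mul_div_mul_left _ _ (abs_ne_zero.mpr ht)]

noncomputable def dirOutl (μ σ : (Ω → ℝ) → ℝ) (X : Matrix m n ℝ) (𝒳 : Ω → Matrix m n ℝ)
    (u : m → ℝ) (v : n → ℝ) : ℝ :=
  standardizedDev μ σ (u ⬝ᵥ (X *ᵥ v)) fun ω => u ⬝ᵥ (𝒳 ω *ᵥ v)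

theorem dirOutl_smul_smul {μ σ : (Ω → ℝ) → ℝ}
    (hμ : ∀ (t : ℝ) (Y : Ω → ℝ), μ (fun ω => t * Y ω) = t * μ Y)
    (hσ : ∀ (t : ℝ) (Y : Ω → ℝ), σ (fun ω => t * Y ω) = |t| * σ Y)
    (X : Matrix m n ℝ) (𝒳 : Ω → Matrix m n ℝ) {t s : ℝ} (ht : t ≠ 0) (hs : s ≠ 0)
    (u : m → ℝ) (v : n → ℝ) :
    dirOutl μ σ X 𝒳 (t • u) (s • v) = dirOutl μ σ X 𝒳 u v := by
  have hform : ∀ M : Matrix m n ℝ, (t • u) ⬝ᵥ (M *ᵥ (s • v)) = (t * s) * (u ⬝ᵥ (M *ᵥ v)) := by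
    intro M
    rw [mulVec_smul, dotProduct_smul, smul_dotProduct, smul_eq_mul, smul_eq_mul, mul_left_comm,
      mul_assoc]
  simp only [dirOutl, hform]
  exact standardizedDev_mul hμ hσ (mul_ne_zero ht hs) _ _

theorem dirOutl_mul_mul (μ σ : (Ω → ℝ) → ℝ) (X : Matrix m n ℝ) (𝒳 : Ω → Matrix m n ℝ)
    (A : Matrix m m ℝ) (B : Matrix n n ℝ) (u : m → ℝ) (v : n → ℝ) :
    dirOutl μ σ (A * X * B) (fun ω => A * 𝒳 ω * B) u v = dirOutl μ σ X 𝒳 (u ᵥ* A) (B *ᵥ v) := by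
  have hform : ∀ M : Matrix m n ℝ, u ⬝ᵥ ((A * M * B) *ᵥ v) = (u ᵥ* A) ⬝ᵥ (M *ᵥ (B *ᵥ v)) := by
    intro M
    rw [← mulVec_mulVec, ← mulVec_mulVec, dotProduct_mulVec]
  simp only [dirOutl, hform]

end Outlyingness

/-- affine invariance.  For invertible `A` (n₁×n₁) and `B` (n₂×n₂), and
location/scale functionals `μ, σ` on real random variables with `μ(sY+c) = sμ(Y)+c` and
`σ(sY+c) = |s|σ(Y)`, the tensor outlyingness satisfies `O(AXB, A𝒳B) = O(X, 𝒳)`, and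
hence `TPD(AXB, A𝒳B) = TPD(X, 𝒳)`. -/
theorem tensorOutl_affine_invariant {n₁ n₂ : ℕ} {Ω : Type*}
    (μ σ : (Ω → ℝ) → ℝ)
    (hμ : ∀ (c t : ℝ) (Y : Ω → ℝ), μ (fun ω => t * Y ω + c) = t * μ Y + c)
    (hσ : ∀ (c t : ℝ) (Y : Ω → ℝ), σ (fun ω => t * Y ω + c) = |t| * σ Y)
    (𝒳 : Ω → Matrix (Fin n₁) (Fin n₂) ℝ)
    (O : Matrix (Fin n₁) (Fin n₂) ℝ → (Ω → Matrix (Fin n₁) (Fin n₂) ℝ) → ℝ)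
    (hO : ∀ X 𝒴, O X 𝒴 = sSup {r | ∃ (u : Fin n₁ → ℝ) (v : Fin n₂ → ℝ),
      u ⬝ᵥ u = 1 ∧ v ⬝ᵥ v = 1 ∧
      r = |u ⬝ᵥ (X *ᵥ v) - μ (fun ω => u ⬝ᵥ (𝒴 ω *ᵥ v))| /
            σ (fun ω => u ⬝ᵥ (𝒴 ω *ᵥ v))})
    (A : Matrix (Fin n₁) (Fin n₁) ℝ) (B : Matrix (Fin n₂) (Fin n₂) ℝ)
    (hA : IsUnit A) (hB : IsUnit B)
    (X : Matrix (Fin n₁) (Fin n₂) ℝ) :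
    O (A * X * B) (fun ω => A * 𝒳 ω * B) = O X 𝒳 ∧
    1 / (1 + O (A * X * B) (fun ω => A * 𝒳 ω * B)) = 1 / (1 + O X 𝒳) := by
  have hμ₀ : ∀ (t : ℝ) (Y : Ω → ℝ), μ (fun ω => t * Y ω) = t * μ Y := by
    simpa using hμ 0
  have hσ₀ : ∀ (t : ℝ) (Y : Ω → ℝ), σ (fun ω => t * Y ω) = |t| * σ Y := by
    simpa using hσ 0
  have hO' : ∀ X 𝒴, O X 𝒴 = sSup {r | ∃ u v, u ≠ 0 ∧ v ≠ 0 ∧ r = dirOutl μ σ X 𝒴 u v} :=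
    fun X 𝒴 => (hO X 𝒴).trans
      (congrArg sSup
        (setOf_unit_eq_setOf_ne_zero (f := dirOutl μ σ X 𝒴) (dirOutl_smul_smul hμ₀ hσ₀ X 𝒴)))
  have hinv : O (A * X * B) (fun ω => A * 𝒳 ω * B) = O X 𝒳 := by
    simp only [hO', dirOutl_mul_mul, setOf_ne_zero_vecMul_mulVec hA hB]
  exact ⟨hinv, by rw [hinv]⟩
end

section
/- Symmetry of TPD: Suppose the distribution of 𝒳 is μ-symmetric about θ, i.e., μ(uᵀ𝒳v) = uᵀθv for all unit vectors u,v, and additionally 𝒳 − θ and θ − 𝒳 are identically distributed (so σ(uᵀ𝒳v) depends only on the law). Then O(θ + Y, 𝒳) = O(θ − Y, 𝒳) for every matrix Y, and hence TPD(θ+Y, 𝒳) = TPD(θ−Y, 𝒳): the depth is symmetric about the center θ. -/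
open Matrix

/-- symmetry of TPD.  If the distribution of `𝒳` is μ-symmetric about
`θ` (`μ(uᵀ𝒳v) = uᵀθv` for all unit `u,v`) and the scale `σ` is sign invariant
(`σ(−Y) = σ(Y)`, as follows from absolute scale equivariance), then
`O(θ+Y) = O(θ−Y)` for every matrix `Y`, and hence `TPD(θ+Y) = TPD(θ−Y)`. -/
theorem tpd_symmetric_about_center {n₁ n₂ : ℕ} {Ω : Type*}
    (μ σ : (Ω → ℝ) → ℝ)
    (hσ : ∀ Y : Ω → ℝ, σ (fun ω => -(Y ω)) = σ Y)
    (𝒳 : Ω → Matrix (Fin n₁) (Fin n₂) ℝ) (θ : Matrix (Fin n₁) (Fin n₂) ℝ)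
    (hsym : ∀ (u : Fin n₁ → ℝ) (v : Fin n₂ → ℝ), u ⬝ᵥ u = 1 → v ⬝ᵥ v = 1 →
      μ (fun ω => u ⬝ᵥ (𝒳 ω *ᵥ v)) = u ⬝ᵥ (θ *ᵥ v))
    (O : Matrix (Fin n₁) (Fin n₂) ℝ → ℝ)
    (hO : ∀ X, O X = sSup {r | ∃ (u : Fin n₁ → ℝ) (v : Fin n₂ → ℝ),
      u ⬝ᵥ u = 1 ∧ v ⬝ᵥ v = 1 ∧
      r = |u ⬝ᵥ (X *ᵥ v) - μ (fun ω => u ⬝ᵥ (𝒳 ω *ᵥ v))| /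
            σ (fun ω => u ⬝ᵥ (𝒳 ω *ᵥ v))})
    (Y : Matrix (Fin n₁) (Fin n₂) ℝ) :
    O (θ + Y) = O (θ - Y) ∧ 1 / (1 + O (θ + Y)) = 1 / (1 + O (θ - Y)) := by
  have key : O (θ + Y) = O (θ - Y) := by
    rw [hO, hO]
    congr 1
    ext r
    constructor
    · rintro ⟨u, v, hu, hv, rfl⟩
      have hu' : (-u) ⬝ᵥ (-u) = 1 := by simpa using hu
      refine ⟨-u, v, hu', hv, ?_⟩
      have hμ := hsym u v hu hv
      have hμ' := hsym (-u) v hu' hv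
      have hσ' : σ (fun ω => (-u) ⬝ᵥ (𝒳 ω *ᵥ v)) = σ (fun ω => u ⬝ᵥ (𝒳 ω *ᵥ v)) := by
        simpa [neg_dotProduct] using hσ (fun ω => u ⬝ᵥ (𝒳 ω *ᵥ v))
      rw [hσ', hμ, hμ']
      congr 1
      simp only [add_mulVec, sub_mulVec, dotProduct_add, dotProduct_sub, neg_dotProduct]
      rw [← abs_neg]
      ring_nf
      exact abs_neg _
    · rintro ⟨u, v, hu, hv, rfl⟩
      have hu' : (-u) ⬝ᵥ (-u) = 1 := by simpa using hu
      refine ⟨-u, v, hu', hv, ?_⟩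
      have hμ := hsym u v hu hv
      have hμ' := hsym (-u) v hu' hv
      have hσ' : σ (fun ω => (-u) ⬝ᵥ (𝒳 ω *ᵥ v)) = σ (fun ω => u ⬝ᵥ (𝒳 ω *ᵥ v)) := by
        simpa [neg_dotProduct] using hσ (fun ω => u ⬝ᵥ (𝒳 ω *ᵥ v))
      rw [hσ', hμ, hμ']
      congr 1
      simp only [add_mulVec, sub_mulVec, dotProduct_add, dotProduct_sub, neg_dotProduct]
      rw [← abs_neg]
      ring_nf
      exact (abs_neg _).symm
  exact ⟨key, by rw [key]⟩
end
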